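/- Recursion theorem with parameters for relatively precomplete numberings: if γ is an A-precomplete numbering, then for every total A-computable binary function h: ℕ × ℕ → ℕ there is a total A-computable unary function f: ℕ → ℕ such that h(n, f(n)) ∼_γ f(n) for all n ∈ ℕ. -/

import Mathlib

open Nat Part

/-- Partial functions on `ℕ` computable relative to an oracle set `A`. -/
inductive OracleRecursiveIn (A : Set ℕ) : (ℕ →. ℕ) → Prop
  | zero : OracleRecursiveIn A (pure 0)
  | succ : OracleRecursiveIn A ↑Nat.succ
  | left : OracleRecursiveIn A ↑fun n : ℕ => n.unpair.1
  | right : OracleRecursiveIn A ↑fun n : ℕ => n.unpair.2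
  | oracle : OracleRecursiveIn A ↑fun n : ℕ => A.indicator 1 n
  | pair {f g} : OracleRecursiveIn A f → OracleRecursiveIn A g →
      OracleRecursiveIn A fun n => Nat.pair <$> f n <*> g n
  | comp {f g} : OracleRecursiveIn A f → OracleRecursiveIn A g →
      OracleRecursiveIn A fun n => g n >>= f
  | prec {f g} : OracleRecursiveIn A f → OracleRecursiveIn A g →
      OracleRecursiveIn A (Nat.unpaired fun a n =>
        n.rec (f a) fun y IH => do let i ← IH; g (Nat.pair a (Nat.pair y i)))
  | rfind {f} : OracleRecursiveIn A f →
      OracleRecursiveIn A fun a => Nat.rfind fun n => (fun m => m = 0) <$> f (Nat.pair a n)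

/-- A total function `f : ℕ → ℕ` is `A`-computable. -/
def OracleComputableIn (A : Set ℕ) (f : ℕ → ℕ) : Prop :=
  OracleRecursiveIn A fun n => Part.some (f n)

/-- A total binary function is `A`-computable. -/
def OracleComputableIn₂ (A : Set ℕ) (h : ℕ → ℕ → ℕ) : Prop :=
  OracleComputableIn A fun n => h n.unpair.1 n.unpair.2

/-- The characteristic function of a set of naturals. -/
noncomputable def chi (A : Set ℕ) : ℕ → ℕ := A.indicator 1

/-- Turing reducibility: `A ≤_T B`. -/
def TuringLE (A B : Set ℕ) : Prop := OracleComputableIn B (chi A)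

/-- `A` is computable. -/
def SetComputable (A : Set ℕ) : Prop := OracleComputableIn ∅ (chi A)

/-- `X` is computably enumerable in `A`: `X` is the domain of a partial
`A`-computable function. -/
def CEIn (A : Set ℕ) (X : Set ℕ) : Prop :=
  ∃ p : ℕ →. ℕ, OracleRecursiveIn A p ∧ X = p.Dom

/-- `A ≤_γ B` (`A` is `(γ,B)`-low): every total `A`-computable function has a
`B`-computable `γ`-lift. -/
def GammaLE (γ : ℕ → ℕ → Prop) (A B : Set ℕ) : Prop :=
  ∀ f : ℕ → ℕ, OracleComputableIn A f →
    ∃ g : ℕ → ℕ, OracleComputableIn B g ∧ ∀ n, γ (f n) (g n)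

/-- `A` is `γ`-low: `A ≤_γ ∅`. -/
def GammaLow (γ : ℕ → ℕ → Prop) (A : Set ℕ) : Prop := GammaLE γ A ∅

/-- `γ` is `(n, A)`-divisible (for finite `n`). -/
def DivisibleFin (γ : ℕ → ℕ → Prop) (n : ℕ) (A : Set ℕ) : Prop :=
  ∃ (x : Fin n → ℕ) (X : Fin n → Set ℕ),
    (∀ i, CEIn A (X i)) ∧
    (∀ i, {m | γ (x i) m} ⊆ X i) ∧
    (∀ i j, i ≠ j → {m | γ (x i) m} ∩ X j = ∅)

/-- `γ` is `(ω, A)`-divisible. -/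
def DivisibleOmega (γ : ℕ → ℕ → Prop) (A : Set ℕ) : Prop :=
  ∃ (x : ℕ → ℕ) (X : ℕ → Set ℕ),
    OracleComputableIn A x ∧
    CEIn A {k : ℕ | k.unpair.2 ∈ X k.unpair.1} ∧
    (∀ i, {m | γ (x i) m} ⊆ X i) ∧
    (∀ i j, i ≠ j → {m | γ (x i) m} ∩ X j = ∅)

/-- `γ` is `A`-precomplete: every partial `A`-computable function has a total
`A`-computable totalization modulo `γ`. -/
def PrecompleteIn (γ : ℕ → ℕ → Prop) (A : Set ℕ) : Prop :=
  ∀ ψ : ℕ →. ℕ, OracleRecursiveIn A ψ →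
    ∃ f : ℕ → ℕ, OracleComputableIn A f ∧ ∀ n, ∀ y ∈ ψ n, γ y (f n)

/-- `γ` is a c.e. numbering. -/
def CENumbering (γ : ℕ → ℕ → Prop) : Prop :=
  CEIn ∅ {k : ℕ | γ k.unpair.1 k.unpair.2}

/-- The `e`-th partial computable function. -/
def phi (e : ℕ) : ℕ →. ℕ := (Denumerable.ofNat Nat.Partrec.Code e).eval

/-- The `e`-th computably enumerable set. -/
def Wset (e : ℕ) : Set ℕ := (phi e).Dom

/-- The halting set `∅'`. -/
def halting : Set ℕ := {e : ℕ | (phi e e).Dom}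

/-!
Let `univ` be a universal partial `A`-computable function. The diagonal
`⟨n, e⟩ ↦ univ ⟨e, ⟨n, e⟩⟩` is partial `A`-computable, so precompleteness gives a total
`A`-computable `g` that agrees with it modulo `γ` wherever it converges. If `e` is an index of the
total `A`-computable function `⟨n, e'⟩ ↦ h n (g ⟨n, e'⟩)`, then `f n := g ⟨n, e⟩` is a fixed point:
the diagonal converges at `⟨n, e⟩` to `h n (f n)`.

The universal function comes from the use principle: a halting `A`-computation queries only
finitely many values of `χ_A`, so it is simulated by a plain partial computable function of a finite
prefix of `χ_A`. Every halting run on a true prefix gives the right value, so `univ` may simply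
search over prefix lengths and step bounds of `Code.evaln`.
-/

universe u

open Encodable Denumerable Filter
open Nat.Partrec (Code)

theorem Part.mem_map_seq {α β γ : Type u} {f : α → β → γ} {p : Part α} {q : Part β} {v : γ} :
    v ∈ f <$> p <*> q ↔ ∃ a ∈ p, ∃ b ∈ q, f a b = v := by
  simp [Seq.seq]

theorem Partrec.natPair_seq {α : Type*} [Primcodable α] {f g : α →. ℕ} (hf : Partrec f)
    (hg : Partrec g) : Partrec fun a => Nat.pair <$> f a <*> g a := by
  have hpair : Partrec₂ fun a b => (g a).map (Nat.pair b) :=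
    (hg.comp Computable.fst).map
      (Primrec₂.natPair.to_comp.comp (Computable.snd.comp Computable.fst) Computable.snd)
  exact (hf.bind hpair).of_eq fun a => by simp [Seq.seq]

/-- The indicator in `OracleRecursiveIn.oracle` is elaborated as `Part ℕ`-valued, with
`1 = Part.some 1` and `0 = Part.some 0`. -/
theorem oracle_eq_chi (A : Set ℕ) :
    (↑fun n : ℕ => A.indicator 1 n : ℕ →. ℕ) = fun n => Part.some (chi A n) := by
  funext n
  by_cases h : n ∈ A <;> simp [chi, h] <;> rfl

namespace OracleRecursiveIn

variable {A : Set ℕ}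

theorem of_eq {f g : ℕ →. ℕ} (hf : OracleRecursiveIn A f) (H : ∀ n, f n = g n) :
    OracleRecursiveIn A g :=
  funext H ▸ hf

theorem of_partrec {f : ℕ →. ℕ} (hf : Nat.Partrec f) : OracleRecursiveIn A f := by
  induction hf with
  | zero => exact .zero
  | succ => exact .succ
  | left => exact .left
  | right => exact .right
  | pair _ _ ihf ihg => exact .pair ihf ihg
  | comp _ _ ihf ihg => exact .comp ihf ihg
  | prec _ _ ihf ihg => exact .prec ihf ihg
  | rfind _ ihf => exact .rfind ihf

theorem comp_computableIn {f : ℕ →. ℕ} {g : ℕ → ℕ} (hf : OracleRecursiveIn A f)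
    (hg : OracleComputableIn A g) : OracleRecursiveIn A fun n => f (g n) :=
  (OracleRecursiveIn.comp hf hg).of_eq fun _ => Part.bind_some _ _

end OracleRecursiveIn

namespace OracleComputableIn

variable {A : Set ℕ}

theorem of_computable {f : ℕ → ℕ} (hf : Computable f) : OracleComputableIn A f :=
  OracleRecursiveIn.of_partrec (Partrec.nat_iff.1 hf)

theorem id : OracleComputableIn A fun n => n :=
  of_computable Computable.id

theorem const (c : ℕ) : OracleComputableIn A fun _ => c :=
  of_computable (Computable.const c)

theorem left : OracleComputableIn A fun n => n.unpair.1 :=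
  OracleRecursiveIn.left

theorem right : OracleComputableIn A fun n => n.unpair.2 :=
  OracleRecursiveIn.right

theorem chi : OracleComputableIn A (chi A) := by
  simpa only [OracleComputableIn, ← oracle_eq_chi] using OracleRecursiveIn.oracle

theorem comp {f g : ℕ → ℕ} (hf : OracleComputableIn A f) (hg : OracleComputableIn A g) :
    OracleComputableIn A fun n => f (g n) :=
  OracleRecursiveIn.comp_computableIn (f := fun n => Part.some (f n)) hf hg

theorem pair {f g : ℕ → ℕ} (hf : OracleComputableIn A f) (hg : OracleComputableIn A g) :
    OracleComputableIn A fun n => Nat.pair (f n) (g n) :=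
  (OracleRecursiveIn.pair hf hg).of_eq fun _ => by simp [Seq.seq]

theorem prec {f s : ℕ → ℕ} (hf : OracleComputableIn A f) (hs : OracleComputableIn A s) :
    OracleComputableIn A fun k =>
      k.unpair.2.rec (f k.unpair.1) fun y IH => s (Nat.pair k.unpair.1 (Nat.pair y IH)) := by
  refine (OracleRecursiveIn.prec hf hs).of_eq fun k => ?_
  simp only [Nat.unpaired]
  induction k.unpair.2 with
  | zero => rfl
  | succ n ih =>
    simp only [Part.bind_eq_bind] at ih ⊢
    rw [ih, Part.bind_some]

end OracleComputableIn

namespace OracleComputableIn₂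

variable {A : Set ℕ} {h : ℕ → ℕ → ℕ}

theorem of_computable₂ (hh : Computable₂ h) : OracleComputableIn₂ A h :=
  .of_computable (hh.comp (Computable.fst.comp Computable.unpair)
    (Computable.snd.comp Computable.unpair))

theorem comp {f g : ℕ → ℕ} (hh : OracleComputableIn₂ A h) (hf : OracleComputableIn A f)
    (hg : OracleComputableIn A g) : OracleComputableIn A fun n => h (f n) (g n) := by
  simpa using OracleComputableIn.comp hh (hf.pair hg)

end OracleComputableIn₂

namespace OracleRecursiveIn

variable {A : Set ℕ}

theorem ofOption {T : ℕ → Option ℕ} (hT : OracleComputableIn A fun n => encode (T n)) :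
    OracleRecursiveIn A fun n => (T n : Part ℕ) :=
  ((of_partrec (Partrec.nat_iff.1 (Computable.ofNat (Option ℕ)).ofOption)).comp_computableIn
    hT).of_eq fun n => by simp

theorem rfindOpt {T : ℕ → Option ℕ} (hT : OracleComputableIn A fun n => encode (T n)) :
    OracleRecursiveIn A fun k => Nat.rfindOpt fun s => T (Nat.pair k s) := by
  have hhalt : OracleComputableIn A fun n => cond (T n).isSome 0 1 :=
    (OracleComputableIn.of_computable (Primrec.cond
      (Primrec.option_isSome.comp (Primrec.ofNat (Option ℕ))) (Primrec.const 0)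
      (Primrec.const 1)).to_comp).comp hT |>.of_eq fun n => by simp
  have hsearch : OracleRecursiveIn A fun k =>
      Nat.pair k <$> Nat.rfind fun s => Part.some (cond (T (Nat.pair k s)).isSome 0 1 = 0) :=
    (OracleRecursiveIn.pair OracleComputableIn.id (.rfind hhalt)).of_eq fun k => by
      simp [Seq.seq]
  refine (OracleRecursiveIn.comp (ofOption hT) hsearch).of_eq fun k => ?_
  rw [Nat.rfindOpt, Part.bind_eq_bind, Part.map_eq_map, Part.bind_map]
  congr 2
  funext s
  cases T (Nat.pair k s) <;> rfl

end OracleRecursiveIn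

theorem OracleComputableIn.encode_range_map {A : Set ℕ} {f : ℕ → ℕ}
    (hf : OracleComputableIn A f) :
    OracleComputableIn A fun m => encode ((List.range m).map f) := by
  have hsnoc : Computable₂ fun l y : ℕ => encode (ofNat (List ℕ) l ++ [y]) :=
    (Primrec.encode.comp (Primrec.list_concat.comp
      ((Primrec.ofNat (List ℕ)).comp Primrec.fst) Primrec.snd)).to_comp
  have hstep : OracleComputableIn A fun w =>
      encode (ofNat (List ℕ) w.unpair.2.unpair.2 ++ [f w.unpair.2.unpair.1]) :=
    (OracleComputableIn₂.of_computable₂ hsnoc).comp (.comp .right .right)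
      (hf.comp (.comp .left .right))
  refine ((OracleComputableIn.prec (.const 0) hstep).comp (.pair (.const 0) .id)).of_eq
    fun m => ?_
  simp only [Nat.unpair_pair]
  induction m with
  | zero => rfl
  | succ m ih => simp_all [List.range_succ]

noncomputable def chiPrefix (A : Set ℕ) (m : ℕ) : List ℕ :=
  (List.range m).map (chi A)

theorem chiPrefix_getElem? {A : Set ℕ} {m x : ℕ} (h : x < m) :
    (chiPrefix A m)[x]? = Option.some (chi A x) := by
  simp [chiPrefix, h]

theorem eq_chi_of_chiPrefix_getElem? {A : Set ℕ} {m x v : ℕ}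
    (h : (chiPrefix A m)[x]? = Option.some v) : v = chi A x := by
  by_cases hx : x < m <;> simp_all [chiPrefix]

/-- The use principle: `F` evaluates `f` with the oracle `χ_A` replaced by its finite prefixes. -/
structure IsPrefixApprox {σ : Type*} (A : Set ℕ) (F : List ℕ → ℕ →. σ) (f : ℕ →. σ) :
    Prop where
  sound : ∀ {m x v}, v ∈ F (chiPrefix A m) x → v ∈ f x
  eventually : ∀ {x v}, v ∈ f x → ∀ᶠ m in atTop, v ∈ F (chiPrefix A m) x

namespace IsPrefixApprox

variable {A : Set ℕ} {F G : List ℕ → ℕ →. ℕ} {f g : ℕ →. ℕ}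

theorem const {σ : Type*} (f : ℕ →. σ) : IsPrefixApprox A (fun _ => f) f :=
  ⟨id, fun hv => .of_forall fun _ => hv⟩

theorem getElem? : IsPrefixApprox A (fun l n => (l[n]? : Part ℕ)) fun n => Part.some (chi A n) where
  sound hv := Part.mem_some_iff.2 (eq_chi_of_chiPrefix_getElem? (Part.mem_coe.1 hv))
  eventually {x v} hv :=
    eventually_gt_atTop x |>.mono fun m hm => by
      rw [Part.mem_some_iff.1 hv, chiPrefix_getElem? hm]
      exact Part.mem_some _

theorem pair (hF : IsPrefixApprox A F f) (hG : IsPrefixApprox A G g) :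
    IsPrefixApprox A (fun l n => Nat.pair <$> F l n <*> G l n)
      fun n => Nat.pair <$> f n <*> g n where
  sound hv := by
    obtain ⟨a, ha, b, hb, rfl⟩ := Part.mem_map_seq.1 hv
    exact Part.mem_map_seq.2 ⟨a, hF.sound ha, b, hG.sound hb, rfl⟩
  eventually hv := by
    obtain ⟨a, ha, b, hb, rfl⟩ := Part.mem_map_seq.1 hv
    filter_upwards [hF.eventually ha, hG.eventually hb] with m ha hb
    exact Part.mem_map_seq.2 ⟨a, ha, b, hb, rfl⟩

theorem comp (hF : IsPrefixApprox A F f) (hG : IsPrefixApprox A G g) :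
    IsPrefixApprox A (fun l n => G l n >>= F l) fun n => g n >>= f where
  sound hv := by
    obtain ⟨a, ha, hv⟩ := Part.mem_bind_iff.1 hv
    exact Part.mem_bind_iff.2 ⟨a, hG.sound ha, hF.sound hv⟩
  eventually hv := by
    obtain ⟨a, ha, hv⟩ := Part.mem_bind_iff.1 hv
    filter_upwards [hG.eventually ha, hF.eventually hv] with m ha hv
    exact Part.mem_bind_iff.2 ⟨a, ha, hv⟩

theorem map {σ τ : Type u} {F : List ℕ → ℕ →. σ} {f : ℕ →. σ} (hF : IsPrefixApprox A F f)
    (q : σ → τ) : IsPrefixApprox A (fun l n => q <$> F l n) fun n => q <$> f n where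
  sound hv := by
    obtain ⟨a, ha, rfl⟩ := (Part.mem_map_iff _).1 hv
    exact Part.mem_map q (hF.sound ha)
  eventually hv := by
    obtain ⟨a, ha, rfl⟩ := (Part.mem_map_iff _).1 hv
    exact (hF.eventually ha).mono fun _ ha => Part.mem_map q ha

theorem prec (hF : IsPrefixApprox A F f) (hG : IsPrefixApprox A G g) :
    IsPrefixApprox A
      (fun l => Nat.unpaired fun a n =>
        n.rec (F l a) fun y IH => do let i ← IH; G l (Nat.pair a (Nat.pair y i)))
      (Nat.unpaired fun a n =>
        n.rec (f a) fun y IH => do let i ← IH; g (Nat.pair a (Nat.pair y i))) where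
  sound {m x v} hv := by
    simp only [Nat.unpaired] at hv ⊢
    generalize x.unpair.2 = n at hv ⊢
    induction n generalizing v with
    | zero => exact hF.sound hv
    | succ n ih =>
      obtain ⟨i, hi, hv⟩ := Part.mem_bind_iff.1 hv
      exact Part.mem_bind_iff.2 ⟨i, ih hi, hG.sound hv⟩
  eventually {x v} hv := by
    simp only [Nat.unpaired] at hv ⊢
    generalize x.unpair.2 = n at hv ⊢
    induction n generalizing v with
    | zero => exact hF.eventually hv
    | succ n ih =>
      obtain ⟨i, hi, hv⟩ := Part.mem_bind_iff.1 hv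
      filter_upwards [ih hi, hG.eventually hv] with m hi hv
      exact Part.mem_bind_iff.2 ⟨i, hi, hv⟩

theorem rfind {P : List ℕ → ℕ →. Bool} {p : ℕ →. Bool} (hP : IsPrefixApprox A P p) :
    IsPrefixApprox A (fun l a => Nat.rfind fun n => P l (Nat.pair a n))
      fun a => Nat.rfind fun n => p (Nat.pair a n) where
  sound hv := by
    obtain ⟨htrue, hfalse⟩ := Nat.mem_rfind.1 hv
    exact Nat.mem_rfind.2 ⟨hP.sound htrue, fun hn => hP.sound (hfalse hn)⟩
  eventually {a v} hv := by
    obtain ⟨htrue, hfalse⟩ := Nat.mem_rfind.1 hv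
    have hbelow : ∀ᶠ m in atTop, ∀ n ∈ Finset.range v, false ∈ P (chiPrefix A m) (Nat.pair a n) :=
      (eventually_all_finset _).2 fun n hn => hP.eventually (hfalse (Finset.mem_range.1 hn))
    filter_upwards [hP.eventually htrue, hbelow] with m htrue hfalse
    exact Nat.mem_rfind.2 ⟨htrue, fun hn => hfalse _ (Finset.mem_range.2 hn)⟩

end IsPrefixApprox

theorem OracleRecursiveIn.exists_isPrefixApprox {A : Set ℕ} {f : ℕ →. ℕ}
    (hf : OracleRecursiveIn A f) :
    ∃ F : List ℕ → ℕ →. ℕ, Partrec₂ F ∧ IsPrefixApprox A F f := by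
  have plain {f : ℕ →. ℕ} (hf : Nat.Partrec f) :
      ∃ F : List ℕ → ℕ →. ℕ, Partrec₂ F ∧ IsPrefixApprox A F f :=
    ⟨fun _ => f, (Partrec.nat_iff.2 hf).comp Computable.snd, .const f⟩
  induction hf with
  | zero => exact plain .zero
  | succ => exact plain .succ
  | left => exact plain .left
  | right => exact plain .right
  | oracle =>
    rw [oracle_eq_chi]
    exact ⟨fun l n => l[n]?, Computable.list_getElem?.ofOption, .getElem?⟩
  | pair _ _ ihf ihg =>
    obtain ⟨F, hFc, hF⟩ := ihf
    obtain ⟨G, hGc, hG⟩ := ihg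
    exact ⟨fun l n => Nat.pair <$> F l n <*> G l n, hFc.natPair_seq hGc, hF.pair hG⟩
  | comp _ _ ihf ihg =>
    obtain ⟨F, hFc, hF⟩ := ihf
    obtain ⟨G, hGc, hG⟩ := ihg
    exact ⟨fun l n => G l n >>= F l,
      hGc.bind (hFc.comp (Computable.fst.comp Computable.fst) Computable.snd), hF.comp hG⟩
  | prec _ _ ihf ihg =>
    obtain ⟨F, hFc, hF⟩ := ihf
    obtain ⟨G, hGc, hG⟩ := ihg
    refine ⟨_, ?_, hF.prec hG⟩
    have hunpair : Computable fun p : List ℕ × ℕ => p.2.unpair :=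
      Computable.unpair.comp Computable.snd
    exact (Partrec.nat_rec (h := fun p yi => G p.1 (Nat.pair p.2.unpair.1 (Nat.pair yi.1 yi.2)))
      (Computable.snd.comp hunpair)
      (hFc.comp Computable.fst (Computable.fst.comp hunpair))
      (hGc.comp (Computable.fst.comp Computable.fst)
        (Primrec₂.natPair.to_comp.comp (Computable.fst.comp (hunpair.comp Computable.fst))
          (Primrec₂.natPair.to_comp.comp (Computable.fst.comp Computable.snd)
            (Computable.snd.comp Computable.snd))))).of_eq fun _ => rfl
  | rfind _ ihf =>
    obtain ⟨F, hFc, hF⟩ := ihf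
    refine ⟨_, ?_, (hF.map fun m => decide (m = 0)).rfind⟩
    exact Partrec.rfind ((hFc.comp (Computable.fst.comp Computable.fst)
      (Primrec₂.natPair.to_comp.comp (Computable.snd.comp Computable.fst) Computable.snd)).map
        (Primrec.beq.comp Primrec.snd (Primrec.const 0)).to_comp)

noncomputable def univ (A : Set ℕ) : ℕ →. ℕ := fun k =>
  Nat.rfindOpt fun s =>
    Code.evaln s.unpair.2 (ofNat Code k.unpair.1) (encode (chiPrefix A s.unpair.1, k.unpair.2))

theorem univ_recursiveIn (A : Set ℕ) : OracleRecursiveIn A (univ A) := by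
  have hstep : Computable₂ fun (p n : ℕ) => encode (Code.evaln n.unpair.2.unpair.2
      (ofNat Code n.unpair.1.unpair.1) (encode (ofNat (List ℕ) p, n.unpair.1.unpair.2))) := by
    have hn : Primrec fun a : ℕ × ℕ => a.2.unpair := Primrec.unpair.comp Primrec.snd
    have hsteps : Primrec fun a : ℕ × ℕ => a.2.unpair.2.unpair.2 :=
      Primrec.snd.comp (Primrec.unpair.comp (Primrec.snd.comp hn))
    have hcode : Primrec fun a : ℕ × ℕ => ofNat Code a.2.unpair.1.unpair.1 :=
      (Primrec.ofNat Code).comp (Primrec.fst.comp (Primrec.unpair.comp (Primrec.fst.comp hn)))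
    have hinput : Primrec fun a : ℕ × ℕ => encode (ofNat (List ℕ) a.1, a.2.unpair.1.unpair.2) :=
      Primrec.encode.comp (((Primrec.ofNat (List ℕ)).comp Primrec.fst).pair
        (Primrec.snd.comp (Primrec.unpair.comp (Primrec.fst.comp hn))))
    exact (Primrec.encode.comp (Code.primrec_evaln.comp ((hsteps.pair hcode).pair hinput))).to_comp
  have hprefix : OracleComputableIn A fun m => encode (chiPrefix A m) :=
    OracleComputableIn.chi.encode_range_map
  refine (OracleRecursiveIn.rfindOpt
    ((OracleComputableIn₂.of_computable₂ hstep).comp (hprefix.comp (.comp .left .right))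
      .id)).of_eq fun k => ?_
  simp [univ]

theorem exists_univ_pair_eq {A : Set ℕ} {f : ℕ →. ℕ} (hf : OracleRecursiveIn A f) :
    ∃ e, ∀ x, univ A (Nat.pair e x) = f x := by
  obtain ⟨F, hFc, hF⟩ := hf.exists_isPrefixApprox
  obtain ⟨c, hc⟩ := Code.exists_code.1 hFc
  have heval : ∀ l x, c.eval (encode (l, x)) = F l x := fun l x => by
    simp [hc, Part.map_id' encode_nat]
  refine ⟨encode c, fun x => ?_⟩
  have hsound : ∀ v ∈ univ A (Nat.pair (encode c) x), v ∈ f x := fun v hv => by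
    obtain ⟨s, hs⟩ := Nat.rfindOpt_spec hv
    simp only [Nat.unpair_pair, ofNat_encode] at hs
    exact hF.sound (heval _ _ ▸ Code.evaln_sound hs)
  refine Part.ext fun v => ⟨hsound v, fun hv => ?_⟩
  obtain ⟨m, hm⟩ := (hF.eventually hv).exists
  obtain ⟨k, hk⟩ := Code.evaln_complete.1 ((heval _ _).symm ▸ hm)
  have hdom : (univ A (Nat.pair (encode c) x)).Dom :=
    Nat.rfindOpt_dom.2 ⟨Nat.pair m k, v, by simpa using hk⟩
  exact Part.mem_unique (hsound _ (Part.get_mem hdom)) hv ▸ Part.get_mem hdom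

theorem recursion_theorem_param_precompleteIn_general (γ : ℕ → ℕ → Prop)
    (A : Set ℕ) (hpre : PrecompleteIn γ A)
    (h : ℕ → ℕ → ℕ) (hh : OracleComputableIn₂ A h) :
    ∃ f : ℕ → ℕ, OracleComputableIn A f ∧ ∀ n : ℕ, γ (h n (f n)) (f n) := by
  obtain ⟨g, hg, hdiag⟩ := hpre (fun k => univ A (Nat.pair k.unpair.2 k))
    ((univ_recursiveIn A).comp_computableIn (.pair .right .id))
  obtain ⟨e, he⟩ := exists_univ_pair_eq (hh.comp .left hg)
  refine ⟨fun n => g (Nat.pair n e), hg.comp (.pair .id (.const e)),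
    fun n => hdiag (Nat.pair n e) _ ?_⟩
  simp [he]

/-- Recursion theorem with parameters for relatively precomplete
numberings. -/
theorem recursion_theorem_param_precompleteIn (γ : ℕ → ℕ → Prop)
    (hγ : Equivalence γ) (A : Set ℕ) (hpre : PrecompleteIn γ A)
    (h : ℕ → ℕ → ℕ) (hh : OracleComputableIn₂ A h) :
    ∃ f : ℕ → ℕ, OracleComputableIn A f ∧ ∀ n : ℕ, γ (h n (f n)) (f n) :=
  recursion_theorem_param_precompleteIn_general γ A hpre h hh
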